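/- Let X be a finite set with |X| ≥ 2. For every cluster system C for X, the adjoint C* is a saturated patchwork that contains C_triv. -/

import Mathlib

/-- Two subsets `A`, `B` are compatible if `A ∩ B ∈ {∅, A, B}`. -/
def Compatible {α : Type*} [DecidableEq α] (A B : Finset α) : Prop :=
  A ∩ B = ∅ ∨ A ∩ B = A ∨ A ∩ B = B

/-- A cluster system: a collection of non-empty subsets of `X`. -/
def IsCS {α : Type*} [DecidableEq α] (C : Set (Finset α)) : Prop :=
  ∀ A ∈ C, A.Nonempty

/-- The adjoint `C*`: all non-empty subsets of `X` compatible with every member of `C`. -/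
def adjS {α : Type*} [DecidableEq α] (C : Set (Finset α)) : Set (Finset α) :=
  {A | A.Nonempty ∧ ∀ B ∈ C, Compatible A B}

/-- A hierarchy: a cluster system whose members are pairwise compatible. -/
def IsHierarchyS {α : Type*} [DecidableEq α] (C : Set (Finset α)) : Prop :=
  IsCS C ∧ ∀ A ∈ C, ∀ B ∈ C, Compatible A B

/-- A maximal hierarchy: a hierarchy not properly contained in any other hierarchy. -/
def IsMaxHierarchyS {α : Type*} [DecidableEq α] (H : Set (Finset α)) : Prop :=
  IsHierarchyS H ∧ ∀ D : Set (Finset α), IsHierarchyS D → H ⊆ D → D = H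

/-- A weak patchwork: incompatible members have their union in the system. -/
def IsWeakPW {α : Type*} [DecidableEq α] (C : Set (Finset α)) : Prop :=
  ∀ A ∈ C, ∀ B ∈ C, ¬Compatible A B → A ∪ B ∈ C

/-- A patchwork: incompatible members have both intersection and union in the system. -/
def IsPW {α : Type*} [DecidableEq α] (C : Set (Finset α)) : Prop :=
  ∀ A ∈ C, ∀ B ∈ C, ¬Compatible A B → A ∩ B ∈ C ∧ A ∪ B ∈ C

/-- A saturated patchwork: for incompatible members `A`, `B`, the five sets
`A ∩ B`, `A ∪ B`, `A - B`, `B - A`, `(A ∪ B) - (A ∩ B)` lie in the system. -/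
def IsSatPW {α : Type*} [DecidableEq α] (C : Set (Finset α)) : Prop :=
  ∀ A ∈ C, ∀ B ∈ C, ¬Compatible A B →
    A ∩ B ∈ C ∧ A ∪ B ∈ C ∧ A \ B ∈ C ∧ B \ A ∈ C ∧ (A ∪ B) \ (A ∩ B) ∈ C

/-- The trivial cluster system: all singletons together with `X` itself. -/
def CtrivS (α : Type*) [Fintype α] [DecidableEq α] : Set (Finset α) :=
  {A | (∃ x : α, A = {x}) ∨ A = Finset.univ}

/-- `C` is ample: for every arc `(C₂, C₁)` of the Hasse diagram (i.e. `C₂ ⊊ C₁`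
with nothing of `C` strictly between), `C₁ - C₂ ∈ C`. -/
def IsAmpleS {α : Type*} [DecidableEq α] (C : Set (Finset α)) : Prop :=
  ∀ C₁ ∈ C, ∀ C₂ ∈ C, C₂ ⊂ C₁ → (∀ B ∈ C, ¬(C₂ ⊂ B ∧ B ⊂ C₁)) → C₁ \ C₂ ∈ C

/-! Two incompatible sets `A`, `B` cut `A ∪ B` into the three non-empty blocks `A ∩ B`, `A \ B`,
`B \ A`. A set compatible with both `A` and `B` either contains `A ∪ B`, misses it, or lies inside a
single block; in each case it is compatible with every union of blocks, and the five sets of a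
saturated patchwork are such unions. -/

namespace Compatible

variable {α : Type*} [DecidableEq α] {A B D S : Finset α}

theorem iff_disjoint_or_subset : Compatible A B ↔ Disjoint A B ∨ A ⊆ B ∨ B ⊆ A := by
  simp only [Compatible, Finset.disjoint_iff_inter_eq_empty, Finset.inter_eq_left,
    Finset.inter_eq_right]

theorem symm (h : Compatible A B) : Compatible B A := by
  rw [iff_disjoint_or_subset] at h ⊢
  rcases h with h | h | h
  exacts [.inl h.symm, .inr (.inr h), .inr (.inl h)]

theorem of_disjoint (h : Disjoint A B) : Compatible A B :=
  iff_disjoint_or_subset.mpr (.inl h)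

theorem of_subset (h : A ⊆ B) : Compatible A B :=
  iff_disjoint_or_subset.mpr (.inr (.inl h))

theorem of_superset (h : B ⊆ A) : Compatible A B :=
  iff_disjoint_or_subset.mpr (.inr (.inr h))

theorem of_forall_mem_imp (h : ∀ x ∈ D, ∀ y ∈ D, x ∈ S → y ∈ S) : Compatible D S := by
  by_cases hDS : Disjoint D S
  · exact of_disjoint hDS
  · obtain ⟨x, hxD, hxS⟩ := Finset.not_disjoint_iff.mp hDS
    exact of_subset fun y hy => h x hxD y hy hxS

theorem singleton_left (x : α) (B : Finset α) : Compatible {x} B := by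
  by_cases hx : x ∈ B
  exacts [of_subset (Finset.singleton_subset_iff.mpr hx),
    of_disjoint (Finset.disjoint_singleton_left.mpr hx)]

theorem univ_left [Fintype α] (B : Finset α) : Compatible Finset.univ B :=
  of_superset (Finset.subset_univ B)

theorem nonempty_inter_sdiff_sdiff (h : ¬Compatible A B) :
    (A ∩ B).Nonempty ∧ (A \ B).Nonempty ∧ (B \ A).Nonempty := by
  simp only [iff_disjoint_or_subset, not_or, Finset.not_disjoint_iff_nonempty_inter] at h
  exact ⟨h.1, Finset.sdiff_nonempty.mpr h.2.1, Finset.sdiff_nonempty.mpr h.2.2⟩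

theorem subset_block_of_incompatible (hA : Compatible D A) (hB : Compatible D B)
    (hAB : ¬Compatible A B) :
    A ∪ B ⊆ D ∨ Disjoint D (A ∪ B) ∨ D ⊆ A ∩ B ∨ D ⊆ A \ B ∨ D ⊆ B \ A := by
  obtain ⟨⟨x, hx⟩, -, -⟩ := nonempty_inter_sdiff_sdiff hAB
  rw [Finset.mem_inter] at hx
  rw [iff_disjoint_or_subset] at hA hB hAB
  push Not at hAB
  rcases hA with hA | hA | hA <;> rcases hB with hB | hB | hB
  · exact .inr (.inl (Finset.disjoint_union_right.mpr ⟨hA, hB⟩))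
  · exact .inr (.inr (.inr (.inr (Finset.subset_sdiff.mpr ⟨hB, hA⟩))))
  · exact absurd (hB hx.2) (Finset.disjoint_right.mp hA hx.1)
  · exact .inr (.inr (.inr (.inl (Finset.subset_sdiff.mpr ⟨hA, hB⟩))))
  · exact .inr (.inr (.inl (Finset.subset_inter hA hB)))
  · exact absurd (hB.trans hA) hAB.2.2
  · exact absurd hx.2 (Finset.disjoint_left.mp hB (hA hx.1))
  · exact absurd (hA.trans hB) hAB.2.1
  · exact .inl (Finset.union_subset hA hB)

/-- `S` is a union of some of the blocks `A ∩ B`, `A \ B`, `B \ A`. -/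
theorem of_union_of_blocks (hA : Compatible D A) (hB : Compatible D B) (hAB : ¬Compatible A B)
    (hS : S ⊆ A ∪ B)
    (hblocks : ∀ x ∈ S, ∀ y ∈ A ∪ B, (x ∈ A ↔ y ∈ A) → (x ∈ B ↔ y ∈ B) → y ∈ S) :
    Compatible D S := by
  rcases subset_block_of_incompatible hA hB hAB with h | h | h | h | h
  · exact of_superset (hS.trans h)
  · exact of_disjoint (h.mono_right hS)
  all_goals
    refine of_forall_mem_imp fun x hx y hy hxS => hblocks x hxS y ?_ ?_ ?_ <;>
    have hx := h hx <;> have hy := h hy <;>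
    simp only [Finset.mem_inter, Finset.mem_sdiff, Finset.mem_union] at hx hy ⊢ <;> tauto

theorem boolean_combinations (hA : Compatible A D) (hB : Compatible B D)
    (hAB : ¬Compatible A B) :
    Compatible (A ∩ B) D ∧ Compatible (A ∪ B) D ∧ Compatible (A \ B) D ∧
      Compatible (B \ A) D ∧ Compatible ((A ∪ B) \ (A ∩ B)) D := by
  refine ⟨?_, ?_, ?_, ?_, ?_⟩ <;> refine (of_union_of_blocks hA.symm hB.symm hAB ?_ ?_).symm <;>
    intro x <;> simp only [Finset.mem_union, Finset.mem_inter, Finset.mem_sdiff] <;> tauto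

end Compatible

theorem adjS_isSatPW {α : Type*} [DecidableEq α] (C : Set (Finset α)) : IsSatPW (adjS C) := by
  rintro A ⟨hAne, hA⟩ B ⟨-, hB⟩ hAB
  obtain ⟨hinter, hAB', hBA'⟩ := Compatible.nonempty_inter_sdiff_sdiff hAB
  have hcompat := fun D hD => Compatible.boolean_combinations (hA D hD) (hB D hD) hAB
  exact ⟨⟨hinter, fun D hD => (hcompat D hD).1⟩,
    ⟨hAne.mono Finset.subset_union_left, fun D hD => (hcompat D hD).2.1⟩,
    ⟨hAB', fun D hD => (hcompat D hD).2.2.1⟩,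
    ⟨hBA', fun D hD => (hcompat D hD).2.2.2.1⟩,
    ⟨hAB'.mono (Finset.sdiff_subset_sdiff Finset.subset_union_left Finset.inter_subset_right),
      fun D hD => (hcompat D hD).2.2.2.2⟩⟩

theorem CtrivS_subset_adjS {α : Type*} [Fintype α] [DecidableEq α] [Nonempty α]
    (C : Set (Finset α)) : CtrivS α ⊆ adjS C := by
  rintro A (⟨x, rfl⟩ | rfl)
  · exact ⟨Finset.singleton_nonempty x, fun B _ => Compatible.singleton_left x B⟩
  · exact ⟨Finset.univ_nonempty, fun B _ => Compatible.univ_left B⟩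

theorem stmt7_general {α : Type*} [Fintype α] [DecidableEq α] (hcard : 2 ≤ Fintype.card α)
    (C : Set (Finset α)) :
    IsSatPW (adjS C) ∧ CtrivS α ⊆ adjS C := by
  have : Nonempty α := Fintype.card_pos_iff.mp (by omega)
  exact ⟨adjS_isSatPW C, CtrivS_subset_adjS C⟩

/-- The adjoint of any cluster system is a saturated patchwork containing `C_triv`. -/
theorem stmt7 {α : Type*} [Fintype α] [DecidableEq α] (hcard : 2 ≤ Fintype.card α)
    (C : Set (Finset α)) (hC : IsCS C) :
    IsSatPW (adjS C) ∧ CtrivS α ⊆ adjS C :=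
  stmt7_general hcard C
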